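/- arXiv:2509.02844 — 2 statements merged into one kernel-verified Lean document; each statement's English description precedes it below -/
import Mathlib

section
/- Let S = {s_1, ..., s_n} be real numbers and let s_{n+1} be a new real number such that (s_1, ..., s_{n+1}) are exchangeable random variables. Let Q^{1-α} denote the empirical (1-α)-quantile of the multiset S ∪ {∞}, i.e., the ⌈(1-α)(n+1)⌉-th smallest element (with ∞ counting as larger than all reals). Then P(s_{n+1} ≤ Q^{1-α}(S ∪ {∞})) ≥ 1-α. -/
open MeasureTheory

/-- The k-th smallest element of a multiset of extended reals (1-indexed),
defaulting to `⊤`. -/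
noncomputable def kthSmallest (m : Multiset EReal) (k : ℕ) : EReal :=
  (m.sort (· ≤ ·)).getD (k - 1) ⊤

lemma le_getD_iff {l : List EReal} (hl : l.Pairwise (· ≤ ·)) {x : EReal} {k : ℕ}
    (hk1 : 1 ≤ k) (hk2 : k ≤ l.length) :
    x ≤ l.getD (k-1) ⊤ ↔ l.countP (fun y => decide (y < x)) < k := by
  have hp : k - 1 < l.length := by omega
  rw [List.getD_eq_getElem l ⊤ hp]
  constructor
  · intro h
    have hsplit : l = l.take (k-1) ++ l.drop (k-1) := (List.take_append_drop _ l).symm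
    have h1 : (l.take (k-1)).countP (fun y => decide (y < x)) ≤ k - 1 :=
      List.countP_le_length.trans (by simp [List.length_take])
    have h2 : (l.drop (k-1)).countP (fun y => decide (y < x)) = 0 := by
      rw [List.countP_eq_zero]
      intro a ha
      obtain ⟨i, hi, rfl⟩ := List.getElem_of_mem ha
      have hlt : k - 1 + i < l.length := by
        have := List.length_drop (i := k-1) (l := l); omega
      rw [List.getElem_drop]
      have : l[k-1] ≤ l[k-1+i] := by
        have := hl.rel_get_of_le (a := ⟨k-1, hp⟩) (b := ⟨k-1+i, by
          have := List.length_drop (i := k-1) (l := l); omega⟩) (by simp)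
        simpa using this
      simp only [decide_eq_true_eq]
      exact not_lt.2 (h.trans this)
    calc l.countP (fun y => decide (y < x))
        = (l.take (k-1)).countP _ + (l.drop (k-1)).countP _ := by
          conv_lhs => rw [hsplit]
          rw [List.countP_append]
      _ < k := by omega
  · intro h
    by_contra hx
    push_neg at hx
    have hall : ∀ a ∈ l.take k, decide (a < x) = true := by
      intro a ha
      obtain ⟨i, hi, rfl⟩ := List.getElem_of_mem ha
      rw [List.getElem_take]
      have hik : i < k := by have := List.length_take (i := k) (l := l); omega
      have : l[i] ≤ l[k-1] := by
        have := hl.rel_get_of_le (a := ⟨i, by omega⟩) (b := ⟨k-1, hp⟩)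
          (by simp; omega)
        simpa using this
      simp only [decide_eq_true_eq]
      exact lt_of_le_of_lt this hx
    have : (l.take k).countP (fun y => decide (y < x)) = (l.take k).length :=
      List.countP_eq_length.2 hall
    have hlen : (l.take k).length = k := by simp [List.length_take]; omega
    have : k ≤ l.countP (fun y => decide (y < x)) := by
      calc k = (l.take k).countP (fun y => decide (y < x)) := by omega
        _ ≤ l.countP _ := by
          conv_rhs => rw [(List.take_append_drop k l).symm]
          rw [List.countP_append]; omega
    omega

lemma card_val_lt {n k : ℕ} (h : k ≤ n+1) :
    (Finset.univ.filter fun t : Fin (n+1) => (t:ℕ) < k).card = k := by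
  rcases Nat.lt_or_ge k (n+1) with hk | hk
  · have : (Finset.univ.filter fun t : Fin (n+1) => (t:ℕ) < k)
        = Finset.Iio (⟨k, by omega⟩ : Fin (n+1)) := by
      ext t; simp [Fin.lt_def]
    rw [this, Fin.card_Iio]
  · have hkk : k = n+1 := by omega
    subst hkk
    have : (Finset.univ.filter fun t : Fin (n+1) => (t:ℕ) < n+1) = Finset.univ := by
      ext t; simp [t.isLt]; exact Nat.lt_succ_iff.mp t.isLt
    rw [this]; simp

lemma card_lt_eq {n : ℕ} (t : Fin (n+1)) :
    (Finset.univ.filter fun i : Fin (n+1) => i < t).card = (t:ℕ) := by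
  have : (Finset.univ.filter fun i : Fin (n+1) => i < t) = Finset.Iio t := by
    ext i; simp
  rw [this, Fin.card_Iio]

lemma card_filter_perm {ι : Type*} [Fintype ι] [DecidableEq ι] (σ : Equiv.Perm ι)
    (p : ι → Prop) [DecidablePred p] :
    (Finset.univ.filter fun i => p (σ i)).card = (Finset.univ.filter p).card := by
  have : (Finset.univ.filter fun i => p (σ i)) = (Finset.univ.filter p).image σ.symm := by
    ext i
    simp only [Finset.mem_filter, Finset.mem_univ, true_and, Finset.mem_image]
    constructor
    · intro h; exact ⟨σ i, h, σ.symm_apply_apply i⟩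
    · rintro ⟨j, hj, rfl⟩; simpa using hj
  rw [this, Finset.card_image_of_injective _ σ.symm.injective]

lemma card_small_rank {n : ℕ} (u : Fin (n+1) → ℝ) {k : ℕ} (hk : k ≤ n + 1) :
    k ≤ (Finset.univ.filter fun j : Fin (n+1) =>
      (Finset.univ.filter fun i : Fin (n+1) => u i < u j).card < k).card := by
  set σ := Tuple.sort u with hσ
  have hmono := Tuple.monotone_sort u
  have : ∀ t : Fin (n+1), (t : ℕ) < k →
      (Finset.univ.filter fun i : Fin (n+1) => u i < u (σ t)).card < k := by
    intro t ht
    have hsub : (Finset.univ.filter fun i : Fin (n+1) => u i < u (σ t)) ⊆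
        (Finset.univ.filter fun i : Fin (n+1) => σ.symm i < t) := by
      intro i hi
      simp only [Finset.mem_filter, Finset.mem_univ, true_and] at hi ⊢
      by_contra hge
      push_neg at hge
      have : u (σ t) ≤ u (σ (σ.symm i)) := hmono hge
      rw [σ.apply_symm_apply] at this
      exact absurd hi (not_lt.2 this)
    have h1 : (Finset.univ.filter fun i : Fin (n+1) => σ.symm i < t).card
        = (Finset.univ.filter fun i : Fin (n+1) => i < t).card :=
      card_filter_perm σ.symm (fun i => i < t)
    have h2 : (Finset.univ.filter fun i : Fin (n+1) => i < t).card = (t : ℕ) :=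
      card_lt_eq t
    calc (Finset.univ.filter fun i : Fin (n+1) => u i < u (σ t)).card
        ≤ _ := Finset.card_le_card hsub
      _ = (t : ℕ) := by rw [h1, h2]
      _ < k := ht
  classical
  have hinj : Set.InjOn (fun t : Fin (n+1) => σ t)
      ((Finset.univ.filter fun t : Fin (n+1) => (t : ℕ) < k) : Finset (Fin (n+1))) :=
    fun a _ b _ h => σ.injective h
  have hmaps : ∀ t ∈ (Finset.univ.filter fun t : Fin (n+1) => (t : ℕ) < k),
      σ t ∈ (Finset.univ.filter fun j : Fin (n+1) =>
        (Finset.univ.filter fun i : Fin (n+1) => u i < u j).card < k) := by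
    intro t ht
    simp only [Finset.mem_filter, Finset.mem_univ, true_and] at ht ⊢
    exact this t ht
  have := Finset.card_le_card_of_injOn _ hmaps hinj
  have hcard : (Finset.univ.filter fun t : Fin (n+1) => (t : ℕ) < k).card = k :=
    card_val_lt hk
  omega

lemma key_iff {n : ℕ} (v : Fin (n+1) → ℝ) {k : ℕ} (hk1 : 1 ≤ k) (hk2 : k ≤ n+1) :
    ((v (Fin.last n) : EReal) ≤ kthSmallest
      ((Finset.univ.val.map fun i : Fin n => ((v i.castSucc : ℝ) : EReal)) + {(⊤ : EReal)}) k)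
    ↔ (Finset.univ.filter fun i : Fin (n+1) => v i < v (Fin.last n)).card < k := by
  classical
  set x : EReal := ((v (Fin.last n) : ℝ) : EReal) with hx
  set m : Multiset EReal :=
    (Finset.univ.val.map fun i : Fin n => ((v i.castSucc : ℝ) : EReal)) + {(⊤ : EReal)} with hm
  have hmcard : Multiset.card m = n + 1 := by simp [hm]
  have hlen : (m.sort (· ≤ ·)).length = n + 1 := by rw [Multiset.length_sort, hmcard]
  rw [kthSmallest]
  rw [le_getD_iff (Multiset.pairwise_sort _ _) hk1 (by omega)]
  have h1 : (m.sort (· ≤ ·)).countP (fun y => decide (y < x))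
      = Multiset.countP (fun y => y < x) m := by
    conv_rhs => rw [← Multiset.sort_eq m (· ≤ ·)]
    rw [Multiset.coe_countP]
  rw [h1]
  have h2 : Multiset.countP (fun y => y < x) m
      = (Finset.univ.filter fun i : Fin (n+1) => v i < v (Fin.last n)).card := by
    rw [hm, Multiset.countP_add, Multiset.countP_map]
    have htop : Multiset.countP (fun y => y < x) ({(⊤ : EReal)} : Multiset EReal) = 0 := by
      rw [show ({(⊤ : EReal)} : Multiset EReal) = (⊤ : EReal) ::ₘ 0 from rfl,
        Multiset.countP_cons]
      simp [hx, not_top_lt]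
    rw [htop, add_zero]
    have : (Multiset.filter (fun i : Fin n => ((v i.castSucc : ℝ) : EReal) < x)
        Finset.univ.val) = (Finset.univ.filter fun i : Fin n => v i.castSucc < v (Fin.last n)).val := by
      simp only [Finset.filter_val]
      congr 1
      ext i
      simp [hx, EReal.coe_lt_coe_iff]
    rw [this]
    have := Finset.card_filter (fun i : Fin n => v i.castSucc < v (Fin.last n)) Finset.univ
    have h4 := Finset.card_filter (fun i : Fin (n+1) => v i < v (Fin.last n)) Finset.univ
    rw [show ((Finset.univ.filter fun i : Fin n => v i.castSucc < v (Fin.last n)).val).card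
      = (Finset.univ.filter fun i : Fin n => v i.castSucc < v (Fin.last n)).card from rfl]
    rw [this, h4, Fin.sum_univ_castSucc]
    simp
  rw [h2]

/-- Split conformal coverage: if `s 0, ..., s n` are exchangeable real random
variables, the last one lies below the `⌈(1-α)(n+1)⌉`-th smallest element of the
first `n` scores together with `∞` with probability at least `1 - α`. -/
theorem stmt_0 {Ω : Type*} [MeasurableSpace Ω] (P : Measure Ω) [IsProbabilityMeasure P]
    (n : ℕ) (s : Fin (n + 1) → Ω → ℝ) (hmeas : ∀ i, Measurable (s i))
    (hexch : ∀ σ : Equiv.Perm (Fin (n + 1)),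
      P.map (fun ω => fun i => s (σ i) ω) = P.map (fun ω => fun i => s i ω))
    (α : ℝ) (hα : α ∈ Set.Ioo (0 : ℝ) 1) :
    1 - α ≤ (P {ω | (s (Fin.last n) ω : EReal) ≤
        kthSmallest
          ((Finset.univ.val.map fun i : Fin n => ((s i.castSucc ω : ℝ) : EReal))
            + {(⊤ : EReal)})
          (⌈(1 - α) * (n + 1 : ℝ)⌉.toNat)}).toReal := by
  classical
  obtain ⟨hα0, hα1⟩ := hα
  set k : ℕ := (⌈(1 - α) * (n + 1 : ℝ)⌉).toNat with hk
  have hpos : (0:ℝ) < (1 - α) * (n + 1 : ℝ) := by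
    have : (0:ℝ) < 1 - α := by linarith
    positivity
  have hceil_pos : 0 < ⌈(1 - α) * (n + 1 : ℝ)⌉ := Int.ceil_pos.2 hpos
  have hk1 : 1 ≤ k := by
    rw [hk]; omega
  have hle : (1 - α) * (n + 1 : ℝ) ≤ ((n:ℝ) + 1) := by nlinarith
  have hceil_le : ⌈(1 - α) * (n + 1 : ℝ)⌉ ≤ ((n : ℤ) + 1) := Int.ceil_le.2 (by push_cast; linarith)
  have hk2 : k ≤ n + 1 := by rw [hk]; omega
  have hkreal : (1 - α) * (n + 1 : ℝ) ≤ (k : ℝ) := by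
    have h := Int.le_ceil ((1 - α) * (n + 1 : ℝ))
    have h2 : ((k:ℕ):ℤ) = ⌈(1 - α) * (n + 1 : ℝ)⌉ := by
      rw [hk]; exact Int.toNat_of_nonneg hceil_pos.le
    have h3 : ((k:ℕ):ℝ) = ((⌈(1 - α) * (n + 1 : ℝ)⌉:ℤ):ℝ) := by exact_mod_cast h2
    rw [h3]; exact h
  set v : Ω → (Fin (n+1) → ℝ) := fun ω i => s i ω with hv
  have hvmeas : Measurable v := measurable_pi_lambda _ fun i => hmeas i
  set g : Fin (n+1) → (Fin (n+1) → ℝ) → ℕ :=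
    fun j u => (Finset.univ.filter fun i => u i < u j).card with hg
  have hgmeas : ∀ j, Measurable (g j) := by
    intro j
    have hrw : g j = fun u => ∑ i : Fin (n+1), if u i < u j then 1 else 0 := by
      funext u; exact Finset.card_filter _ _
    rw [hrw]
    exact Finset.measurable_sum _ fun i _ =>
      Measurable.ite (measurableSet_lt (measurable_pi_apply i) (measurable_pi_apply j))
        measurable_const measurable_const
  set A : Fin (n+1) → Set (Fin (n+1) → ℝ) := fun j => {u | g j u < k} with hA
  have hAmeas : ∀ j, MeasurableSet (A j) := by
    intro j
    have : A j = g j ⁻¹' (Set.Iio k) := rfl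
    rw [this]
    exact (hgmeas j) (by trivial)
  have hevent : {ω | (s (Fin.last n) ω : EReal) ≤
        kthSmallest
          ((Finset.univ.val.map fun i : Fin n => ((s i.castSucc ω : ℝ) : EReal))
            + {(⊤ : EReal)}) k} = v ⁻¹' A (Fin.last n) := by
    ext ω
    simp only [Set.mem_setOf_eq, Set.mem_preimage, hA, hv, hg]
    exact key_iff (fun i => s i ω) hk1 hk2
  have hmap : ∀ j, P (v ⁻¹' A j) = P (v ⁻¹' A (Fin.last n)) := by
    intro j
    set σ : Equiv.Perm (Fin (n+1)) := Equiv.swap j (Fin.last n) with hσ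
    set T : (Fin (n+1) → ℝ) → (Fin (n+1) → ℝ) := fun u => u ∘ σ with hT
    have hTmeas : Measurable T := measurable_pi_lambda _ fun i => measurable_pi_apply (σ i)
    have hAT : A j = T ⁻¹' A (Fin.last n) := by
      ext u
      simp only [hA, Set.mem_preimage, Set.mem_setOf_eq]
      have heq : g (Fin.last n) (T u) = g j u := by
        have h1 : g (Fin.last n) (T u)
            = (Finset.univ.filter fun i => u (σ i) < u j).card := by
          simp only [hg, hT, Function.comp]
          congr 1
          ext i
          rw [hσ]
          simp [Equiv.swap_apply_right]
        rw [h1, hg]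
        exact card_filter_perm σ (fun i => u i < u j)
      rw [heq]
    calc P (v ⁻¹' A j) = (P.map v) (A j) := (Measure.map_apply hvmeas (hAmeas j)).symm
      _ = (P.map v) (T ⁻¹' A (Fin.last n)) := by rw [hAT]
      _ = ((P.map v).map T) (A (Fin.last n)) :=
          (Measure.map_apply hTmeas (hAmeas _)).symm
      _ = (P.map (T ∘ v)) (A (Fin.last n)) := by rw [Measure.map_map hTmeas hvmeas]
      _ = (P.map v) (A (Fin.last n)) := by
          have hTv : T ∘ v = fun ω => fun i => s (σ i) ω := rfl
          rw [hTv, hexch σ]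
      _ = P (v ⁻¹' A (Fin.last n)) := Measure.map_apply hvmeas (hAmeas _)
  have hsum : (k : ENNReal) ≤ ∑ j : Fin (n+1), P (v ⁻¹' A j) := by
    have hpt : ∀ ω, (k : ENNReal)
        ≤ ∑ j : Fin (n+1), (v ⁻¹' A j).indicator (fun _ => (1:ENNReal)) ω := by
      intro ω
      have hcomb := card_small_rank (v ω) hk2
      have hsum_eq : ∑ j : Fin (n+1), (v ⁻¹' A j).indicator (fun _ => (1:ENNReal)) ω
          = ((Finset.univ.filter fun j : Fin (n+1) => g j (v ω) < k).card : ENNReal) := by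
        rw [Finset.card_filter]
        push_cast
        apply Finset.sum_congr rfl
        intro j _
        by_cases h : g j (v ω) < k <;>
          simp [Set.indicator, hA, Set.mem_preimage, Set.mem_setOf_eq, h]
      rw [hsum_eq]
      exact_mod_cast hcomb
    calc (k:ENNReal) = ∫⁻ _, (k:ENNReal) ∂P := by simp
      _ ≤ ∫⁻ ω, ∑ j : Fin (n+1), (v ⁻¹' A j).indicator (fun _ => 1) ω ∂P :=
          lintegral_mono hpt
      _ = ∑ j : Fin (n+1), ∫⁻ ω, (v ⁻¹' A j).indicator (fun _ => 1) ω ∂P :=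
          lintegral_finset_sum _ (fun j _ =>
            (measurable_one.indicator (hvmeas (hAmeas j))))
      _ = ∑ j : Fin (n+1), P (v ⁻¹' A j) := by
          apply Finset.sum_congr rfl
          intro j _
          rw [lintegral_indicator (hvmeas (hAmeas j))]
          simp
  have hfinal : (k : ENNReal) ≤ (n+1 : ℕ) * P (v ⁻¹' A (Fin.last n)) := by
    calc (k:ENNReal) ≤ ∑ j : Fin (n+1), P (v ⁻¹' A j) := hsum
      _ = ∑ _j : Fin (n+1), P (v ⁻¹' A (Fin.last n)) :=
          Finset.sum_congr rfl fun j _ => hmap j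
      _ = (n+1 : ℕ) * P (v ⁻¹' A (Fin.last n)) := by
          rw [Finset.sum_const, Finset.card_univ, Fintype.card_fin, nsmul_eq_mul]
  have hne : ((n+1 : ℕ) : ENNReal) * P (v ⁻¹' A (Fin.last n)) ≠ ⊤ :=
    ENNReal.mul_ne_top (by simp) (measure_ne_top P _)
  have hreal : (k : ℝ) ≤ ((n:ℝ)+1) * (P (v ⁻¹' A (Fin.last n))).toReal := by
    have := ENNReal.toReal_mono hne hfinal
    rw [ENNReal.toReal_mul] at this
    rw [ENNReal.toReal_natCast] at this; simpa [ENNReal.toReal_add] using this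
  rw [hevent]
  have hnn : (0:ℝ) < (n:ℝ) + 1 := by positivity
  nlinarith [hkreal, hreal]
end

section
/- Under the hypotheses of the previous statement, if additionally for each z the proportion |T_z|/T converges to some p_z ∈ [0,1] as T → ∞ with |T_z| → ∞ for each z with p_z > 0, then (1/T) Σ_{z=1}^K ((1 - (1-cγ)^{|T_z|})/γ)|α - α*_z| → 0 as T → ∞. Consequently lim_{T→∞} |(1/T) Σ_{t=1}^T e_t - α| = 0. -/
/-- Asymptotic validity of CPTC: the partition-based bound vanishes as `T → ∞`,
hence the average miscoverage converges to `α`. -/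
theorem stmt_3 (K : ℕ) (hK : 1 ≤ K)
    (γ c α : ℝ) (hγ : 0 < γ) (hc : 0 < c * γ) (hc1 : c * γ < 1)
    (αs : Fin K → ℝ) (hα : α ∈ Set.Icc (0 : ℝ) 1)
    (hαs : ∀ z, αs z ∈ Set.Icc (0 : ℝ) 1)
    (w : Fin K → ℕ → ℕ) (hw : ∀ T, 1 ≤ T → ∑ z, w z T = T)
    (p : Fin K → ℝ) (hp01 : ∀ z, p z ∈ Set.Icc (0 : ℝ) 1)
    (hp : ∀ z, Filter.Tendsto (fun T : ℕ => (w z T : ℝ) / T) Filter.atTop (nhds (p z)))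
    (hinf : ∀ z, 0 < p z → Filter.Tendsto (fun T => w z T) Filter.atTop Filter.atTop)
    (e : ℕ → ℝ) (he : ∀ t, e t ∈ Set.Icc (0 : ℝ) 1)
    (hbound : ∀ T : ℕ, 1 ≤ T →
      |(1 / T : ℝ) * ∑ t ∈ Finset.Icc 1 T, e t - α|
        ≤ (1 / T : ℝ) * ∑ z, (1 - (1 - c * γ) ^ w z T) / γ * |α - αs z|) :
    Filter.Tendsto (fun T : ℕ =>
      (1 / T : ℝ) * ∑ z, (1 - (1 - c * γ) ^ w z T) / γ * |α - αs z|)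
      Filter.atTop (nhds 0) ∧
    Filter.Tendsto (fun T : ℕ =>
      |(1 / T : ℝ) * ∑ t ∈ Finset.Icc 1 T, e t - α|) Filter.atTop (nhds 0) := by
  set C : ℝ := ∑ z : Fin K, (1 / γ) * |α - αs z| with hC
  have hpow : ∀ (n : ℕ), (0:ℝ) ≤ (1 - c * γ) ^ n ∧ (1 - c * γ) ^ n ≤ 1 := by
    intro n
    constructor
    · exact pow_nonneg (by linarith) n
    · exact pow_le_one₀ (by linarith) (by linarith)
  have hterm : ∀ (z : Fin K) (T : ℕ),
      (0:ℝ) ≤ (1 - (1 - c * γ) ^ w z T) / γ * |α - αs z| ∧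
      (1 - (1 - c * γ) ^ w z T) / γ * |α - αs z| ≤ (1 / γ) * |α - αs z| := by
    intro z T
    obtain ⟨h0, h1⟩ := hpow (w z T)
    constructor
    · apply mul_nonneg (div_nonneg (by linarith) hγ.le) (abs_nonneg _)
    · apply mul_le_mul_of_nonneg_right _ (abs_nonneg _)
      rw [div_le_div_iff₀ hγ hγ]
      nlinarith
  have hSnonneg : ∀ T : ℕ, (0:ℝ) ≤ ∑ z, (1 - (1 - c * γ) ^ w z T) / γ * |α - αs z| :=
    fun T => Finset.sum_nonneg fun z _ => (hterm z T).1
  have hSle : ∀ T : ℕ, (∑ z, (1 - (1 - c * γ) ^ w z T) / γ * |α - αs z|) ≤ C :=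
    fun T => Finset.sum_le_sum fun z _ => (hterm z T).2
  have h1 : Filter.Tendsto (fun T : ℕ =>
      (1 / T : ℝ) * ∑ z, (1 - (1 - c * γ) ^ w z T) / γ * |α - αs z|)
      Filter.atTop (nhds 0) := by
    have hlim : Filter.Tendsto (fun T : ℕ => (1 / T : ℝ) * C) Filter.atTop (nhds 0) := by
      simpa using (tendsto_one_div_atTop_nhds_zero_nat.mul_const C)
    apply squeeze_zero
    · intro T
      exact mul_nonneg (by positivity) (hSnonneg T)
    · intro T
      exact mul_le_mul_of_nonneg_left (hSle T) (by positivity)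
    · exact hlim
  refine ⟨h1, ?_⟩
  apply squeeze_zero' (Filter.Eventually.of_forall fun T => abs_nonneg _) ?_ h1
  filter_upwards [Filter.eventually_ge_atTop 1] with T hT
  exact hbound T hT
end
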